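/- arXiv:2112.09821 — 3 statements merged into one kernel-verified Lean document; each statement's English description precedes it below -/
import Mathlib

section
/- Let m_j, m_k > 0 and define α ∈ (−π/2, π/2) by cos α = 2√(m_j m_k)/(m_j+m_k), sin α = (m_k − m_j)/(m_j+m_k). The map (u₁⁻, u₂⁻) ↦ (u₁⁺, u₂⁺) = R(α)·(u₂⁻, u₁⁻), where R(α) is rotation by α in ℝ², is a bijection from the open half-plane {u₁⁻ > √(m_j/m_k) u₂⁻} onto the open half-plane {u₁⁺ < √(m_j/m_k) u₂⁺}. -/
open Real

theorem collision_halfplane_bijection (mj mk : ℝ) (hmj : 0 < mj) (hmk : 0 < mk)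
    (α : ℝ) (hα : α ∈ Set.Ioo (-(π / 2)) (π / 2))
    (hcos : Real.cos α = 2 * Real.sqrt (mj * mk) / (mj + mk))
    (hsin : Real.sin α = (mk - mj) / (mj + mk)) :
    Set.BijOn
      (fun u : ℝ × ℝ => (Real.cos α * u.2 - Real.sin α * u.1,
                         Real.sin α * u.2 + Real.cos α * u.1))
      {u : ℝ × ℝ | u.1 > Real.sqrt (mj / mk) * u.2}
      {u : ℝ × ℝ | u.1 < Real.sqrt (mj / mk) * u.2} := by
  have pyth := Real.sin_sq_add_cos_sq α
  set a := Real.sqrt mj with ha'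
  set b := Real.sqrt mk with hb'
  have ha : a ^ 2 = mj := Real.sq_sqrt hmj.le
  have hb : b ^ 2 = mk := Real.sq_sqrt hmk.le
  have hbpos : 0 < b := Real.sqrt_pos.mpr hmk
  have hbne : b ≠ 0 := ne_of_gt hbpos
  have habne : a ^ 2 + b ^ 2 ≠ 0 := by positivity
  have hrdef : Real.sqrt (mj / mk) = a / b := by
    rw [ha', hb', Real.sqrt_div hmj.le]
  set r := Real.sqrt (mj / mk) with hr
  have hc : Real.cos α = 2 * (a * b) / (a ^ 2 + b ^ 2) := by
    rw [hcos, ha', hb', ← Real.sqrt_mul hmj.le, ha, hb]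
  have hs : Real.sin α = (b ^ 2 - a ^ 2) / (a ^ 2 + b ^ 2) := by
    rw [hsin, ha, hb]
  have key1 : Real.cos α - r * Real.sin α = r := by
    rw [hc, hs, hrdef]; field_simp; ring
  have key2 : Real.sin α + r * Real.cos α = 1 := by
    rw [hc, hs, hrdef]; field_simp; ring
  have lin : ∀ x y : ℝ,
      (Real.cos α * y - Real.sin α * x) - r * (Real.sin α * y + Real.cos α * x)
        = r * y - x := by
    intro x y
    linear_combination y * key1 - x * key2
  refine ⟨?_, ?_, ?_⟩
  · intro u hu
    simp only [Set.mem_setOf_eq] at hu ⊢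
    linarith [lin u.1 u.2]
  · intro u _ v _ h
    have h1 : Real.cos α * u.2 - Real.sin α * u.1
        = Real.cos α * v.2 - Real.sin α * v.1 := congrArg Prod.fst h
    have h2 : Real.sin α * u.2 + Real.cos α * u.1
        = Real.sin α * v.2 + Real.cos α * v.1 := congrArg Prod.snd h
    have e1 : u.1 = v.1 := by
      linear_combination Real.cos α * h2 - Real.sin α * h1 + (v.1 - u.1) * pyth
    have e2 : u.2 = v.2 := by
      linear_combination Real.sin α * h2 + Real.cos α * h1 + (v.2 - u.2) * pyth
    exact Prod.ext e1 e2
  · intro v hv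
    simp only [Set.mem_setOf_eq] at hv
    refine ⟨(Real.cos α * v.2 - Real.sin α * v.1,
             Real.cos α * v.1 + Real.sin α * v.2), ?_, ?_⟩
    · simp only [Set.mem_setOf_eq]
      have := lin v.1 v.2
      linarith
    · have e1 : Real.cos α * (Real.cos α * v.1 + Real.sin α * v.2)
          - Real.sin α * (Real.cos α * v.2 - Real.sin α * v.1) = v.1 := by
        linear_combination v.1 * pyth
      have e2 : Real.sin α * (Real.cos α * v.1 + Real.sin α * v.2)
          + Real.cos α * (Real.cos α * v.2 - Real.sin α * v.1) = v.2 := by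
        linear_combination v.2 * pyth
      exact Prod.ext e1 e2
end

section
/- Fix reals ω, g, α ≠ 0, λ, and points (x₁,y₁), (x₂,y₂) on the unit circle with x₁ = −x₂ and λ = (y₂−y₁)/(x₂−x₁). Then for every w ≠ 0 and δ with δ ≠ w, the pair (w, δ) satisfies the equation (w+ωy₂)² + (λw − gα/(2w) − ωx₂)² = (−w+δ+ωy₂)² + (λ(−w+δ) − gα/(2(−w+δ)) − ωx₂)² if and only if it satisfies (w+ωy₁)² + (λw + gα/(2w) − ωx₁)² = (−w+δ+ωy₁)² + (λ(−w+δ) + gα/(2(−w+δ)) − ωx₁)². -/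
theorem symmetric_chord_energy_equivalence (ω g x1 y1 x2 y2 α lam : ℝ)
    (h1 : x1 ^ 2 + y1 ^ 2 = 1) (h2 : x2 ^ 2 + y2 ^ 2 = 1)
    (hsym : x1 = -x2) (hne : x1 ≠ x2)
    (hα : α = x2 - x1) (hαne : α ≠ 0)
    (hlam : lam = (y2 - y1) / (x2 - x1))
    (w δ : ℝ) (hw : w ≠ 0) (hwδ : -w + δ ≠ 0) (hδ : δ ≠ w) :
    ((w + ω * y2) ^ 2 + (lam * w - g * α / (2 * w) - ω * x2) ^ 2
      = (-w + δ + ω * y2) ^ 2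
        + (lam * (-w + δ) - g * α / (2 * (-w + δ)) - ω * x2) ^ 2)
    ↔
    ((w + ω * y1) ^ 2 + (lam * w + g * α / (2 * w) - ω * x1) ^ 2
      = (-w + δ + ω * y1) ^ 2
        + (lam * (-w + δ) + g * α / (2 * (-w + δ)) - ω * x1) ^ 2) := by
  have hx : x2 - x1 ≠ 0 := fun h => hne (by linarith)
  have hlam' : lam * (x2 - x1) = y2 - y1 := by
    rw [hlam]; field_simp
  have key : ∀ t : ℝ, t ≠ 0 →
      (t + ω * y2) ^ 2 + (lam * t - g * α / (2 * t) - ω * x2) ^ 2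
        - ((t + ω * y1) ^ 2 + (lam * t + g * α / (2 * t) - ω * x1) ^ 2)
      = ω ^ 2 * (y2 ^ 2 - y1 ^ 2) - 2 * lam * g * α := by
    intro t ht
    have hy2 : y2 = y1 + lam * (2 * x2) := by
      have := hlam'; rw [hsym] at this; linarith
    subst hsym hα hy2
    field_simp
    ring
  have k1 := key w hw
  have k2 := key (-w + δ) hwδ
  constructor <;> intro h <;> linarith
end

section
/- Let F(u, δ) = 4(1−uδ)²((1+λ²)δ + 2ω(y₂ − λx₂)) + 4αgωx₂u²(1−uδ) − α²g²u⁴δ and suppose f is a smooth function on a neighborhood of 0 with f(0) = δ₀ := 2ω(λx₂ − y₂)/(1+λ²) and F(u, f(u)) = 0 for all u in that neighborhood. Then f'(0) = 0 and f''(0) = −2αgωx₂/(1+λ²). -/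
lemma Gderiv (lam α g ω x2 y2 : ℝ) (f : ℝ → ℝ) (u d : ℝ) (hf : HasDerivAt f d u) :
    HasDerivAt (fun x => 4 * (1 - x * f x) ^ 2 * ((1 + lam ^ 2) * f x + 2 * ω * (y2 - lam * x2))
        + 4 * α * g * ω * x2 * x ^ 2 * (1 - x * f x)
        - α ^ 2 * g ^ 2 * x ^ 4 * f x)
      (4*(1+lam^2)*(1-u*f u)^2 * d
        - 8*(f u + u*d)*(1-u*f u)*((1+lam^2)*f u + 2*ω*(y2-lam*x2))
        + 4*α*g*ω*x2*(2*u*(1-u*f u) - u^2*(f u + u*d))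
        - α^2*g^2*(4*u^3*f u + u^4*d)) u := by
  have h1 : HasDerivAt (fun x : ℝ => x * f x) (1 * f u + u * d) u :=
    (hasDerivAt_id' (x := u)).mul hf
  have h2 : HasDerivAt (fun x : ℝ => 1 - x * f x) (0 - (1 * f u + u * d)) u :=
    (hasDerivAt_const u (1:ℝ)).sub h1
  have h3 := h2.pow 2
  have h4 : HasDerivAt (fun x => (1 + lam ^ 2) * f x + 2 * ω * (y2 - lam * x2))
      ((1 + lam ^ 2) * d) u := (hf.const_mul (1 + lam ^ 2)).add_const _
  have t1 := (h3.const_mul (4:ℝ)).mul h4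
  have t2 := ((hasDerivAt_pow 2 u).const_mul (4*α*g*ω*x2)).mul h2
  have t3 := ((hasDerivAt_pow 4 u).const_mul (α^2*g^2)).mul hf
  have := (t1.add t2).sub t3
  convert this using 1
  case e'_4 => rfl
  case e'_5 => rfl
  case e'_8 => rfl
  simp only [Pi.pow_apply, Pi.mul_apply, Pi.add_apply]
  push_cast
  ring

lemma Ederiv (lam α g ω x2 y2 : ℝ) (f : ℝ → ℝ) (d1 d2 : ℝ)
    (hf : HasDerivAt f d1 0) (hg : HasDerivAt (deriv f) d2 0) :
    HasDerivAt (fun u =>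
      4*(1+lam^2)*(1-u*f u)^2 * deriv f u
        - 8*(f u + u*deriv f u)*(1-u*f u)*((1+lam^2)*f u + 2*ω*(y2-lam*x2))
        + 4*α*g*ω*x2*(2*u*(1-u*f u) - u^2*(f u + u*deriv f u))
        - α^2*g^2*(4*u^3*f u + u^4*deriv f u))
      (4*(1+lam^2)*d2 - 8*(1+lam^2)*(f 0)*d1
        - 16*d1*((1+lam^2)*(f 0) + 2*ω*(y2-lam*x2))
        + 8*(f 0)^2*((1+lam^2)*(f 0) + 2*ω*(y2-lam*x2))
        - 8*(f 0)*(1+lam^2)*d1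
        + 2*(4*α*g*ω*x2)) 0 := by
  have h1 : HasDerivAt (fun x : ℝ => x * f x) (1 * f 0 + 0 * d1) 0 :=
    (hasDerivAt_id' (x := 0)).mul hf
  have h2 : HasDerivAt (fun x : ℝ => 1 - x * f x) (0 - (1 * f 0 + 0 * d1)) 0 :=
    (hasDerivAt_const 0 (1:ℝ)).sub h1
  have h3 := h2.pow 2
  have h4 : HasDerivAt (fun x => (1 + lam ^ 2) * f x + 2 * ω * (y2 - lam * x2))
      ((1 + lam ^ 2) * d1) 0 := (hf.const_mul (1 + lam ^ 2)).add_const _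
  have hid : HasDerivAt (fun x : ℝ => x * deriv f x) (1 * deriv f 0 + 0 * d2) 0 :=
    (hasDerivAt_id' (x := 0)).mul hg
  have hsum := hf.add hid
  have t1 := (h3.const_mul (4*(1+lam^2))).mul hg
  have t2 := ((hsum.const_mul (8:ℝ)).mul h2).mul h4
  have i3a := ((hasDerivAt_id' (x := (0:ℝ))).const_mul (2:ℝ)).mul h2
  have i3b := (hasDerivAt_pow 2 (0:ℝ)).mul hsum
  have t3 := (i3a.sub i3b).const_mul (4*α*g*ω*x2)
  have i4a := ((hasDerivAt_pow 3 (0:ℝ)).const_mul (4:ℝ)).mul hf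
  have i4b := (hasDerivAt_pow 4 (0:ℝ)).mul hg
  have t4 := (i4a.add i4b).const_mul (α^2*g^2)
  have := ((t1.sub t2).add t3).sub t4
  convert this using 1
  case e'_4 => rfl
  case e'_5 => rfl
  case e'_8 => rfl
  simp only [Pi.pow_apply, Pi.mul_apply, Pi.add_apply]
  have hd : deriv f 0 = d1 := hf.deriv
  rw [hd]
  push_cast
  ring

theorem implicit_solution_derivatives (lam α g ω x2 y2 : ℝ)
    (F : ℝ → ℝ → ℝ)
    (hF : ∀ u δ, F u δ =
      4 * (1 - u * δ) ^ 2 * ((1 + lam ^ 2) * δ + 2 * ω * (y2 - lam * x2))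
        + 4 * α * g * ω * x2 * u ^ 2 * (1 - u * δ)
        - α ^ 2 * g ^ 2 * u ^ 4 * δ)
    (δ0 : ℝ) (hδ0 : δ0 = 2 * ω * (lam * x2 - y2) / (1 + lam ^ 2))
    (f : ℝ → ℝ) (s : Set ℝ) (hs : s ∈ nhds (0 : ℝ))
    (hsmooth : ContDiffOn ℝ (⊤ : ℕ∞) f s)
    (hf0 : f 0 = δ0)
    (hsol : ∀ u ∈ s, F u (f u) = 0) :
    deriv f 0 = 0 ∧ deriv (deriv f) 0 = -(2 * α * g * ω * x2) / (1 + lam ^ 2) := by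
  obtain ⟨t, hts, ht, ht0⟩ := mem_nhds_iff.mp hs
  have hp : (1 + lam ^ 2) ≠ 0 := by positivity
  have hkey : (1 + lam ^ 2) * δ0 + 2 * ω * (y2 - lam * x2) = 0 := by
    rw [hδ0]; field_simp; ring
  have hst : ContDiffOn ℝ (⊤ : ℕ∞) f t := hsmooth.mono hts
  have hfd : ∀ u ∈ t, HasDerivAt f (deriv f u) u := fun u hu =>
    ((hst.differentiableOn (by norm_num)).differentiableAt (ht.mem_nhds hu)).hasDerivAt
  have hds : ContDiffOn ℝ (⊤ : ℕ∞) (deriv f) t := hst.deriv_of_isOpen ht (by simp)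
  have hfd2 : HasDerivAt (deriv f) (deriv (deriv f) 0) 0 :=
    ((hds.differentiableOn (by norm_num)).differentiableAt (ht.mem_nhds ht0)).hasDerivAt
  -- the composed function vanishes on t
  have hG0 : ∀ x ∈ t, (fun x => 4 * (1 - x * f x) ^ 2 * ((1 + lam ^ 2) * f x + 2 * ω * (y2 - lam * x2))
        + 4 * α * g * ω * x2 * x ^ 2 * (1 - x * f x)
        - α ^ 2 * g ^ 2 * x ^ 4 * f x) x = 0 := by
    intro x hx
    have := hsol x (hts hx)
    rw [hF] at this
    exact this
  -- first-order identity on t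
  have hE0 : ∀ u ∈ t,
      4*(1+lam^2)*(1-u*f u)^2 * deriv f u
        - 8*(f u + u*deriv f u)*(1-u*f u)*((1+lam^2)*f u + 2*ω*(y2-lam*x2))
        + 4*α*g*ω*x2*(2*u*(1-u*f u) - u^2*(f u + u*deriv f u))
        - α^2*g^2*(4*u^3*f u + u^4*deriv f u) = 0 := by
    intro u hu
    have hD := Gderiv lam α g ω x2 y2 f u (deriv f u) (hfd u hu)
    have hz : HasDerivAt (fun x => 4 * (1 - x * f x) ^ 2 * ((1 + lam ^ 2) * f x + 2 * ω * (y2 - lam * x2))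
        + 4 * α * g * ω * x2 * x ^ 2 * (1 - x * f x)
        - α ^ 2 * g ^ 2 * x ^ 4 * f x) 0 u := by
      refine (hasDerivAt_const u (0:ℝ)).congr_of_eventuallyEq ?_
      filter_upwards [ht.mem_nhds hu] with x hx
      exact hG0 x hx
    exact hD.unique hz
  have hd1 : deriv f 0 = 0 := by
    have h := hE0 0 ht0
    rw [hf0] at h
    have h2 : (1 + lam ^ 2) * deriv f 0 = 0 := by
      linear_combination (1/4) * h + 2 * δ0 * hkey
    exact (mul_eq_zero.mp h2).resolve_left hp
  refine ⟨hd1, ?_⟩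
  have hD2 := Ederiv lam α g ω x2 y2 f (deriv f 0) (deriv (deriv f) 0)
    (hfd 0 ht0) hfd2
  have hz2 : HasDerivAt (fun u =>
      4*(1+lam^2)*(1-u*f u)^2 * deriv f u
        - 8*(f u + u*deriv f u)*(1-u*f u)*((1+lam^2)*f u + 2*ω*(y2-lam*x2))
        + 4*α*g*ω*x2*(2*u*(1-u*f u) - u^2*(f u + u*deriv f u))
        - α^2*g^2*(4*u^3*f u + u^4*deriv f u)) 0 0 := by
    refine (hasDerivAt_const 0 (0:ℝ)).congr_of_eventuallyEq ?_
    filter_upwards [ht.mem_nhds ht0] with x hx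
    exact hE0 x hx
  have hval := hD2.unique hz2
  rw [hf0, hd1] at hval
  rw [eq_div_iff hp]
  linear_combination (1/4) * hval - 2 * δ0^2 * hkey
end
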